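/- arXiv:1101.5608 — 6 statements merged into one kernel-verified Lean document; each statement's English description precedes it below -/
import Mathlib

section
/- As formal power series in z over ℚ, if u = z/(1+z)^2 then for every k ≥ 0 one has (1+z)·z^k = Σ_{n≥k} (C(2n,n-k) − C(2n,n-k-1)) · u^n, i.e., the coefficient of u^n in (1+z)z^k (after substituting the compositional inverse of u) equals C(2n,n-k) − C(2n,n-k-1). -/
open PowerSeries Finset

/-!
Write `u = X/(1+X)²` and `f k = (1+X) Xᵏ`. Since `X = u (1+X)²`, multiplying `f k` by
`(1+X)²/X = X⁻¹ + 2 + X` gives `f (k+1) = u (f k + 2 f (k+1) + f (k+2))` and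
`f 0 = 1 + u (f 0 + f 1)`. The numbers `c n k = C(2n,n-k) - C(2n,n-k-1)` obey the same
three-term recurrence `c (n+1) k = c n (k-1) + 2 c n k + c n (k+1)`, and the reflection
`c n (-1) = - c n 0` accounts for the missing `f (-1)` term at `k = 0`. Hence the partial sums
`∑_{n<m} c n k uⁿ` satisfy the same recurrence as `f k` up to one extra factor `u`, and since
`X ∣ u` an induction on `m` shows that they agree with `f k` modulo `X^m`.
-/

/-- Binomial coefficient with integer arguments: `0` outside `0 ≤ b ≤ a`. -/
def intChoose (a b : ℤ) : ℤ :=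
  if 0 ≤ b ∧ b ≤ a then (a.toNat.choose b.toNat : ℤ) else 0

lemma intChoose_of_nonneg {a b : ℤ} (ha : 0 ≤ a) (hb : 0 ≤ b) :
    intChoose a b = (a.toNat.choose b.toNat : ℤ) := by
  unfold intChoose
  split_ifs with h
  · rfl
  · rw [Nat.choose_eq_zero_of_lt (by omega), Nat.cast_zero]

lemma intChoose_of_neg (a : ℤ) {b : ℤ} (hb : b < 0) : intChoose a b = 0 := by
  unfold intChoose
  rw [if_neg (by omega)]

lemma intChoose_succ_left {a : ℤ} (ha : 0 ≤ a) (b : ℤ) :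
    intChoose (a + 1) b = intChoose a b + intChoose a (b - 1) := by
  rcases lt_trichotomy b 0 with hb | rfl | hb
  · simp only [intChoose_of_neg _ hb, intChoose_of_neg _ (show b - 1 < 0 by omega), add_zero]
  · rw [intChoose_of_nonneg (by omega) le_rfl, intChoose_of_nonneg ha le_rfl,
      intChoose_of_neg _ (by omega)]
    simp
  · rw [intChoose_of_nonneg (by omega) hb.le, intChoose_of_nonneg ha hb.le,
      intChoose_of_nonneg ha (by omega), show (a + 1).toNat = a.toNat + 1 by omega,
      show b.toNat = (b - 1).toNat + 1 by omega, Nat.choose_succ_succ, Nat.cast_add, add_comm]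

lemma intChoose_add_two_left {a : ℤ} (ha : 0 ≤ a) (b : ℤ) :
    intChoose (a + 2) b = intChoose a b + 2 * intChoose a (b - 1) + intChoose a (b - 2) := by
  rw [show a + 2 = a + 1 + 1 by ring, intChoose_succ_left (by omega), intChoose_succ_left ha,
    intChoose_succ_left ha, show b - 1 - 1 = b - 2 by ring]
  ring

lemma intChoose_symm {a : ℤ} (ha : 0 ≤ a) (b : ℤ) : intChoose a b = intChoose a (a - b) := by
  unfold intChoose
  split_ifs with h h' h' <;> try omega
  rw [show (a - b).toNat = a.toNat - b.toNat by omega, Nat.choose_symm (by omega)]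

def ballotCoeff (n : ℕ) (k : ℤ) : ℤ :=
  intChoose (2 * n) (n - k) - intChoose (2 * n) (n - k - 1)

lemma ballotCoeff_succ (n : ℕ) (k : ℤ) :
    ballotCoeff (n + 1) k = ballotCoeff n (k - 1) + 2 * ballotCoeff n k + ballotCoeff n (k + 1) := by
  have hn : (0 : ℤ) ≤ 2 * n := by positivity
  simp only [ballotCoeff, Nat.cast_succ, show 2 * ((n : ℤ) + 1) = 2 * n + 2 by ring,
    intChoose_add_two_left hn]
  ring_nf

lemma ballotCoeff_neg_one (n : ℕ) : ballotCoeff n (-1) = -ballotCoeff n 0 := by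
  have h := intChoose_symm (show (0 : ℤ) ≤ 2 * n by positivity) (n - 1)
  rw [show 2 * (n : ℤ) - (n - 1) = n - -1 by ring] at h
  rw [ballotCoeff, ballotCoeff, ← h, sub_neg_eq_add, add_sub_cancel_right, sub_zero, neg_sub]

lemma ballotCoeff_zero_zero : ballotCoeff 0 0 = 1 := by decide

lemma ballotCoeff_zero_of_pos {k : ℤ} (hk : 0 < k) : ballotCoeff 0 k = 0 := by
  rw [ballotCoeff, intChoose_of_neg _ (by omega), intChoose_of_neg _ (by omega), sub_zero]

section Series

variable {K : Type*} [Field K]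

noncomputable def uSeries : K⟦X⟧ := X * ((1 + X) ^ 2)⁻¹

lemma X_eq_uSeries_mul : (X : K⟦X⟧) = uSeries * (1 + X) ^ 2 := by
  rw [uSeries, mul_assoc, PowerSeries.inv_mul_cancel _ (by simp), mul_one]

lemma X_dvd_uSeries : (X : K⟦X⟧) ∣ uSeries := dvd_mul_right _ _

noncomputable def ballotPartialSum (m : ℕ) (k : ℤ) : K⟦X⟧ :=
  ∑ n ∈ range m, C (ballotCoeff n k : K) * uSeries ^ n

lemma ballotPartialSum_succ (m : ℕ) (k : ℤ) :
    (ballotPartialSum (m + 1) k : K⟦X⟧) = C (ballotCoeff 0 k : K) +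
      uSeries * (ballotPartialSum m (k - 1) + 2 * ballotPartialSum m k +
        ballotPartialSum m (k + 1)) := by
  simp only [ballotPartialSum, sum_range_succ', pow_zero, mul_one, mul_sum, ← sum_add_distrib]
  rw [add_comm]
  congr 1
  refine sum_congr rfl fun n _ => ?_
  rw [ballotCoeff_succ]
  push_cast
  simp only [map_add, map_mul, map_ofNat]
  ring

lemma ballotPartialSum_neg_one (m : ℕ) :
    (ballotPartialSum m (-1) : K⟦X⟧) = -ballotPartialSum m 0 := by
  simp only [ballotPartialSum, ballotCoeff_neg_one, Int.cast_neg, map_neg, neg_mul, sum_neg_distrib]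

lemma X_pow_dvd_sub_ballotPartialSum (m k : ℕ) :
    (X : K⟦X⟧) ^ m ∣ (1 + X) * X ^ k - ballotPartialSum m k := by
  induction m generalizing k with
  | zero => exact pow_zero (X : K⟦X⟧) ▸ one_dvd _
  | succ m ih =>
    rw [pow_succ']
    cases k with
    | zero =>
      have key : (1 + X) * X ^ 0 - (ballotPartialSum (m + 1) (0 : ℕ) : K⟦X⟧) =
          uSeries * (((1 + X) * X ^ 0 - ballotPartialSum m (0 : ℕ)) +
            ((1 + X) * X ^ 1 - ballotPartialSum m (1 : ℕ))) := by
        rw [ballotPartialSum_succ, Nat.cast_zero, zero_sub, ballotPartialSum_neg_one, zero_add,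
          ballotCoeff_zero_zero, Int.cast_one, map_one, Nat.cast_one]
        linear_combination (X_eq_uSeries_mul (K := K))
      rw [key]
      exact mul_dvd_mul X_dvd_uSeries (dvd_add (ih 0) (ih 1))
    | succ k =>
      have key : (1 + X) * X ^ (k + 1) - (ballotPartialSum (m + 1) (k + 1 : ℕ) : K⟦X⟧) =
          uSeries * (((1 + X) * X ^ k - ballotPartialSum m k) +
            2 * ((1 + X) * X ^ (k + 1) - ballotPartialSum m (k + 1 : ℕ)) +
            ((1 + X) * X ^ (k + 2) - ballotPartialSum m (k + 2 : ℕ))) := by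
        rw [ballotPartialSum_succ, ballotCoeff_zero_of_pos (by omega), Int.cast_zero, map_zero,
          zero_add]
        push_cast
        rw [add_sub_cancel_right, show (k : ℤ) + 1 + 1 = k + 2 by ring]
        linear_combination (1 + X) * X ^ k * X_eq_uSeries_mul (K := K)
      rw [key]
      exact mul_dvd_mul X_dvd_uSeries (dvd_add (dvd_add (ih k) (dvd_mul_of_dvd_right (ih _) _))
        (ih _))

end Series

/-- With `u = z/(1+z)²` in `ℚ⟦z⟧`, for every `k ≥ 0`,
`(1+z)·z^k = Σ_{n≥k} (C(2n,n-k) − C(2n,n-k-1)) uⁿ`, the sum being understood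
coefficientwise (the term `uⁿ` has order `≥ n`, so only `n ≤ m` contribute to the
coefficient of `z^m`). -/
theorem stmt2 (k : ℕ) :
    ∀ m : ℕ,
      (PowerSeries.coeff (R := ℚ) m) ((1 + PowerSeries.X) * PowerSeries.X ^ k)
        = ∑ n ∈ Finset.range (m + 1),
            ((intChoose (2 * n) ((n : ℤ) - k) - intChoose (2 * n) ((n : ℤ) - k - 1) : ℤ) : ℚ)
              * (PowerSeries.coeff (R := ℚ) m)
                  ((PowerSeries.X * ((1 + PowerSeries.X : PowerSeries ℚ) ^ 2)⁻¹) ^ n) := by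
  intro m
  have h := X_pow_dvd_iff.mp (X_pow_dvd_sub_ballotPartialSum (K := ℚ) (m + 1) k) m m.lt_succ_self
  rw [map_sub, sub_eq_zero, ballotPartialSum, map_sum] at h
  simp only [coeff_C_mul] at h
  exact h
end

section
/- Let OP_k be the set of overpartitions whose underlying partition fits inside the staircase δ_{k-1} = (k-1, k-2, ..., 1). Then Σ_{μ ∈ OP_k} (-1)^{s(μ)} q^{|μ|} = 1, where s(μ) is the number of overlined parts. -/
/-- An overpartition whose underlying partition fits inside the staircase
`δ_{k-1} = (k-1, k-2, …, 1)`: a weakly decreasing list of positive parts with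
`i`-th part (1-indexed) at most `k - i`, together with a set of overlined part
sizes, which must be sizes actually occurring. -/
structure Overpartition (k : ℕ) where
  /-- the parts, in weakly decreasing order -/
  parts : List ℕ
  sorted : parts.Pairwise (· ≥ ·)
  pos : ∀ p ∈ parts, 0 < p
  fits : ∀ i : ℕ, ∀ h : i < parts.length, parts.get ⟨i, h⟩ + i + 1 ≤ k
  /-- the set of overlined part sizes -/
  overlined : Finset ℕ
  overSub : ∀ p ∈ overlined, p ∈ parts

/-!
Toggling the overline on the largest part is an involution on the nonempty overpartitions which
preserves `|μ|` and changes `s(μ)` by one, so all terms cancel except that of the empty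
overpartition. The staircase condition only serves to make `OP_k` finite.
-/

open scoped symmDiff

lemma Finset.neg_one_pow_card_symmDiff_singleton {R α : Type*} [Monoid R] [HasDistribNeg R]
    [DecidableEq α] (s : Finset α) (a : α) : (-1 : R) ^ (s ∆ {a}).card = -(-1) ^ s.card := by
  by_cases ha : a ∈ s
  · have hs : s ∆ {a} = s.erase a := by
      ext b; by_cases hb : b = a <;> simp [Finset.mem_symmDiff, hb, ha]
    rw [hs, ← Finset.card_erase_add_one ha, pow_succ, mul_neg_one, neg_neg]
  · have hs : s ∆ {a} = insert a s := by
      ext b; by_cases hb : b = a <;> simp [Finset.mem_symmDiff, hb, ha]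
    rw [hs, Finset.card_insert_of_notMem ha, pow_succ, mul_neg_one]

lemma List.finite_setOf_length_le_forall_lt (n k : ℕ) :
    {l : List ℕ | l.length ≤ n ∧ ∀ x ∈ l, x < k}.Finite := by
  refine ((List.finite_length_le (Fin k) n).image (List.map Fin.val)).subset ?_
  rintro l ⟨hlen, hlt⟩
  exact ⟨l.pmap Fin.mk hlt, by simpa using hlen, by simp [List.map_pmap]⟩

namespace Overpartition

variable {k : ℕ}

@[ext]
lemma ext {μ ν : Overpartition k} (hparts : μ.parts = ν.parts)
    (hoverlined : μ.overlined = ν.overlined) : μ = ν := by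
  cases μ; cases ν; simp_all

lemma lt_of_mem_parts (μ : Overpartition k) {p : ℕ} (hp : p ∈ μ.parts) : p < k := by
  obtain ⟨i, rfl⟩ := List.get_of_mem hp
  have := μ.fits i i.isLt
  simp only [Fin.eta] at this
  omega

lemma length_parts_le (μ : Overpartition k) : μ.parts.length ≤ k := by
  cases h : μ.parts.length with
  | zero => omega
  | succ n =>
    have := μ.fits n (by omega)
    omega

instance : Finite (Overpartition k) := by
  have hrange : (Set.range fun μ : Overpartition k ↦ (μ.parts, μ.overlined)).Finite := by
    refine Set.Finite.subset ((List.finite_setOf_length_le_forall_lt k k).prod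
      (Finset.range k).powerset.finite_toSet) ?_
    rintro _ ⟨μ, rfl⟩
    refine ⟨⟨μ.length_parts_le, fun _ ↦ μ.lt_of_mem_parts⟩, ?_⟩
    simpa [Set.subset_def] using fun p hp ↦ μ.lt_of_mem_parts (μ.overSub p hp)
  have := hrange.to_subtype
  refine Finite.of_injective_finite_range (f := fun μ : Overpartition k ↦ (μ.parts, μ.overlined)) ?_
  intro μ ν h
  exact ext (congrArg Prod.fst h) (congrArg Prod.snd h)

def nil (k : ℕ) : Overpartition k where
  parts := []
  sorted := List.Pairwise.nil
  pos := by simp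
  fits := by simp
  overlined := ∅
  overSub := by simp

lemma eq_nil_of_parts_eq_nil {μ : Overpartition k} (h : μ.parts = []) : μ = nil k :=
  ext h <| Finset.eq_empty_of_forall_notMem fun p hp ↦ by simpa [h] using μ.overSub p hp

def toggle (μ : Overpartition k) (h : μ.parts ≠ []) : Overpartition k :=
  { μ with
    overlined := μ.overlined ∆ {μ.parts.head h}
    overSub := fun p hp ↦ by
      rcases Finset.mem_symmDiff.mp hp with ⟨hp, -⟩ | ⟨hp, -⟩
      · exact μ.overSub p hp
      · exact Finset.mem_singleton.mp hp ▸ List.head_mem h }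

@[simp] lemma toggle_parts (μ : Overpartition k) (h : μ.parts ≠ []) :
    (μ.toggle h).parts = μ.parts := rfl

@[simp] lemma toggle_overlined (μ : Overpartition k) (h : μ.parts ≠ []) :
    (μ.toggle h).overlined = μ.overlined ∆ {μ.parts.head h} := rfl

lemma toggle_toggle (μ : Overpartition k) (h : μ.parts ≠ []) (h' : (μ.toggle h).parts ≠ []) :
    (μ.toggle h).toggle h' = μ :=
  ext rfl (symmDiff_symmDiff_cancel_right _ _)

lemma toggle_ne (μ : Overpartition k) (h : μ.parts ≠ []) : μ.toggle h ≠ μ := fun heq ↦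
  Finset.singleton_ne_empty _ <| symmDiff_eq_left.mp (congrArg overlined heq)

variable {R : Type*} [Ring R]

def weight (q : R) (μ : Overpartition k) : R := (-1) ^ μ.overlined.card * q ^ μ.parts.sum

lemma weight_toggle (q : R) (μ : Overpartition k) (h : μ.parts ≠ []) :
    (μ.toggle h).weight q = -μ.weight q := by
  simp [weight, Finset.neg_one_pow_card_symmDiff_singleton]

lemma weight_nil (q : R) : (nil k).weight q = 1 := by
  simp [weight, nil]

theorem finsum_weight (q : R) : ∑ᶠ μ : Overpartition k, μ.weight q = 1 := by
  classical
  have := Fintype.ofFinite (Overpartition k)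
  have hne {μ : Overpartition k} (hμ : μ ∈ Finset.univ.erase (nil k)) : μ.parts ≠ [] :=
    fun h ↦ Finset.ne_of_mem_erase hμ (eq_nil_of_parts_eq_nil h)
  have hcancel : ∑ μ ∈ Finset.univ.erase (nil k), μ.weight q = 0 :=
    Finset.sum_involution (fun μ hμ ↦ μ.toggle (hne hμ))
      (fun μ hμ ↦ by rw [weight_toggle, add_neg_cancel])
      (fun μ hμ _ ↦ toggle_ne μ (hne hμ))
      (fun μ hμ ↦ Finset.mem_erase.mpr ⟨fun h ↦ hne hμ (congrArg parts h), Finset.mem_univ _⟩)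
      (fun μ hμ ↦ toggle_toggle μ _ _)
  rw [finsum_eq_sum_of_fintype, ← Finset.add_sum_erase _ _ (Finset.mem_univ (nil k)), hcancel,
    weight_nil, add_zero]

end Overpartition

/-- `Σ_{μ ∈ OP_k} (-1)^{s(μ)} q^{|μ|} = 1` where `s(μ)` is the number of overlined
parts and `|μ|` the sum of the parts.  (The type `Overpartition k` is finite, and
the sum is expressed with `finsum`.) -/
theorem stmt5 (k : ℕ) :
    ∑ᶠ μ : Overpartition k,
        ((-1 : Polynomial ℤ) ^ μ.overlined.card * Polynomial.X ^ (μ.parts.sum))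
      = 1 :=
  Overpartition.finsum_weight Polynomial.X
end

section
/- Let H(z) = Σ_{k≥0} z^k Σ_{j=-k}^{k} y^j q^{k(k+1)-j^2}, viewed as a formal power series in z with coefficients Laurent polynomials in y, q. Then H satisfies the functional equation H(z) = 1/(1−yqz) + 1/(1−y^{-1}qz) − 1 + z q^2 H(z q^2). -/
open PowerSeries

/-!
Write `H = Σ c_k z^k`. Splitting off the two extreme terms `j = ±(k+1)` of `c_{k+1}` leaves
`(yq)^{k+1} + (y⁻¹q)^{k+1}`, and on the remaining range `|j| ≤ k` the `q`-exponent exceeds the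
one in `c_k` by exactly `(k+1)(k+2) - k(k+1) = 2(k+1)`. Hence
`c_{k+1} = (yq)^{k+1} + (y⁻¹q)^{k+1} + (q²)^{k+1} c_k` with `c_0 = 1`, which is the functional
equation read coefficientwise.
-/

section

variable {K : Type*} [Field K]

theorem PowerSeries.inv_one_sub_C_mul_X (a : K) : (1 - C a * X)⁻¹ = mk (a ^ ·) := by
  rw [inv_eq_iff_mul_eq_one (by simp)]
  simpa [rescale_mk] using congrArg (rescale a) (mk_one_mul_one_sub_eq_one K)

theorem PowerSeries.mk_eq_inv_add_inv_sub_one_add_C_mul_X_mul_rescale {c : ℕ → K} {a b r : K}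
    (h_zero : c 0 = 1)
    (h_succ : ∀ m, c (m + 1) = a ^ (m + 1) + b ^ (m + 1) + r ^ (m + 1) * c m) :
    mk c = (1 - C a * X)⁻¹ + (1 - C b * X)⁻¹ - 1 + C r * X * rescale r (mk c) := by
  rw [inv_one_sub_C_mul_X, inv_one_sub_C_mul_X, mul_assoc]
  ext (_ | m)
  · simp [h_zero]
  · simp only [map_add, map_sub, coeff_mk, coeff_one, if_neg m.succ_ne_zero, coeff_C_mul,
      coeff_succ_X_mul, coeff_rescale, h_succ]
    ring

end

theorem Finset.sum_Icc_neg_succ_natCast {M : Type*} [AddCommMonoid M] (f : ℤ → M) (n : ℕ) :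
    ∑ j ∈ Icc (-((n + 1 : ℕ) : ℤ)) (n + 1 : ℕ), f j
      = f (-((n + 1 : ℕ) : ℤ)) + f (n + 1 : ℕ) + ∑ j ∈ Icc (-(n : ℤ)) n, f j := by
  have h_Icc : Icc (-((n + 1 : ℕ) : ℤ)) (n + 1 : ℕ)
      = insert (-((n + 1 : ℕ) : ℤ)) (insert ((n + 1 : ℕ) : ℤ) (Icc (-(n : ℤ)) n)) := by
    ext; simp only [mem_Icc, mem_insert]; omega
  rw [h_Icc, sum_insert (by simp; omega), sum_insert (by simp), add_assoc]

section

variable {K : Type*} [Field K] (y q : K)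

noncomputable def coeffH (k : ℕ) : K :=
  ∑ j ∈ Finset.Icc (-(k : ℤ)) k, y ^ j * q ^ ((k : ℤ) * (k + 1) - j ^ 2)

theorem coeffH_zero : coeffH y q 0 = 1 := by
  simp [coeffH]

theorem coeffH_succ (m : ℕ) :
    coeffH y q (m + 1)
      = (y * q) ^ (m + 1) + (y⁻¹ * q) ^ (m + 1) + (q ^ 2) ^ (m + 1) * coeffH y q m := by
  have h_edge :
      ((m + 1 : ℕ) : ℤ) * ((m + 1 : ℕ) + 1) - ((m + 1 : ℕ) : ℤ) ^ 2 = (m + 1 : ℕ) := by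
    push_cast; ring
  have h_inner : ∀ j ∈ Finset.Icc (-(m : ℤ)) m,
      y ^ j * q ^ (((m + 1 : ℕ) : ℤ) * ((m + 1 : ℕ) + 1) - j ^ 2)
        = (q ^ 2) ^ (m + 1) * (y ^ j * q ^ ((m : ℤ) * (m + 1) - j ^ 2)) := by
    intro j hj
    have hj_sq : j ^ 2 ≤ (m : ℤ) ^ 2 :=
      sq_le_sq' (Finset.mem_Icc.1 hj).1 (Finset.mem_Icc.1 hj).2
    -- the combined exponent is positive, so `zpow_add'` applies even when `q = 0`
    rw [← pow_mul, ← zpow_natCast, mul_left_comm,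
      ← zpow_add' (.inr (.inl (by push_cast; nlinarith)))]
    congr 2
    push_cast; ring
  rw [coeffH, coeffH, Finset.sum_Icc_neg_succ_natCast, Finset.sum_congr rfl h_inner,
    ← Finset.mul_sum, neg_sq, h_edge, zpow_neg, zpow_natCast, zpow_natCast]
  ring

end

theorem stmt6_general {K : Type*} [Field K] (y q : K) :
    letI H : PowerSeries K :=
      PowerSeries.mk fun k => ∑ j ∈ Finset.Icc (-(k : ℤ)) (k : ℤ),
        y ^ j * q ^ ((k : ℤ) * ((k : ℤ) + 1) - j ^ 2)
    H = (1 - PowerSeries.C (R := K) (y * q) * PowerSeries.X)⁻¹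
        + (1 - PowerSeries.C (R := K) (y⁻¹ * q) * PowerSeries.X)⁻¹
        - 1
        + PowerSeries.C (R := K) (q ^ 2) * PowerSeries.X * PowerSeries.rescale (q ^ 2) H :=
  mk_eq_inv_add_inv_sub_one_add_C_mul_X_mul_rescale (coeffH_zero y q) (coeffH_succ y q)

/-- The series `H(z) = Σ_{k≥0} z^k Σ_{j=-k}^{k} y^j q^{k(k+1)-j²}` satisfies the
functional equation
`H(z) = 1/(1−yqz) + 1/(1−y⁻¹qz) − 1 + z q² H(zq²)`. -/
theorem stmt6 {K : Type*} [Field K] (y q : K) (hy : y ≠ 0) (hq : q ≠ 0) :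
    letI H : PowerSeries K :=
      PowerSeries.mk fun k => ∑ j ∈ Finset.Icc (-(k : ℤ)) (k : ℤ),
        y ^ j * q ^ ((k : ℤ) * ((k : ℤ) + 1) - j ^ 2)
    H = (1 - PowerSeries.C (R := K) (y * q) * PowerSeries.X)⁻¹
        + (1 - PowerSeries.C (R := K) (y⁻¹ * q) * PowerSeries.X)⁻¹
        - 1
        + PowerSeries.C (R := K) (q ^ 2) * PowerSeries.X * PowerSeries.rescale (q ^ 2) H :=
  stmt6_general y q
end

section
/- Jacobi's triple product specialization: as formal power series in q, Π_{i≥1} (1−q^i)/(1+q^i) = Σ_{i=-∞}^{∞} (−q)^{i^2} = 1 + 2 Σ_{i≥1} (−1)^{i^2} q^{i^2} = 1 + 2 Σ_{i≥1} (−1)^i q^{i^2}. -/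
/-!
Write `(a; t)_n = ∏_{i<n} (1 - a tⁱ)` and `[a+b, a]_t` for the Gaussian binomial coefficient.
The q-binomial theorem `∏_{i<n} (x + y tⁱ) = ∑_{a+b=n} t^(a choose 2) [n, a]_t yᵃ xᵇ` at
`x = q^(2M)`, `y = q`, `t = q²` has left side `q^(3M²) (-q; q²)_M²` and right side
`∑_{a+b=2M} q^(3M² + (a-M)²) [2M, a]_{q²}`; cancelling `q^(3M²)` and replacing `q` by `-q` gives the
finite Jacobi triple product `(q; q²)_M² = ∑_{|k|≤M} (-q)^(k²) [2M, M+k]_{q²}`.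
Since `[a+b, a]_t (t; t)_b = (t^(a+1); t)_b`, the coefficient `[2M, M+k]_{q²} (q²; q²)_M` is `1`
modulo `q^(2(M-|k|)+2)`, so `(q; q²)_M² (q²; q²)_M` agrees with `∑ (-q)^(k²)` below degree `M + 1`.
Finally `(q; q)_{2M} = (q; q²)_M (q²; q²)_M` and `(q; q)_N (-q; q)_N = (q²; q²)_N`, and all these
partial products stabilise `q`-adically, which turns the previous congruence into
`(q; q)_N ≡ (∑ (-q)^(k²)) (-q; q)_N`.
-/

open PowerSeries

/-- Coefficients of `Σ_{i∈ℤ} (−q)^{i²} = 1 + 2 Σ_{i≥1} (−1)^i q^{i²}` in `ℤ⟦q⟧`. -/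
noncomputable def jacobiRHS : PowerSeries ℤ :=
  PowerSeries.mk fun n =>
    if n = 0 then 1 else if (Nat.sqrt n) ^ 2 = n then 2 * (-1 : ℤ) ^ (Nat.sqrt n) else 0

/-- One factor `(1−q^i)/(1+q^i)` of the infinite product (here `i = j+1 ≥ 1`),
the denominator being inverted via its inverse as a unit of `ℤ⟦q⟧`. -/
noncomputable def jacobiFactor (j : ℕ) : PowerSeries ℤ :=
  (1 - PowerSeries.X ^ (j + 1)) *
    PowerSeries.invOfUnit (1 + PowerSeries.X ^ (j + 1)) 1

open Finset

section QAnalogues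

variable {R : Type*} [CommRing R]

def qPochhammer (a t : R) (n : ℕ) : R := ∏ i ∈ range n, (1 - a * t ^ i)

@[simp] lemma qPochhammer_zero (a t : R) : qPochhammer a t 0 = 1 := prod_range_zero _

lemma qPochhammer_succ (a t : R) (n : ℕ) :
    qPochhammer a t (n + 1) = qPochhammer a t n * (1 - a * t ^ n) := prod_range_succ _ _

lemma qPochhammer_succ' (a t : R) (n : ℕ) :
    qPochhammer a t (n + 1) = (1 - a) * qPochhammer (a * t) t n := by
  rw [qPochhammer, prod_range_succ', pow_zero, mul_one, mul_comm, qPochhammer]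
  simp only [pow_succ', mul_assoc]

theorem qPochhammer_mul_qPochhammer_neg (a t : R) (n : ℕ) :
    qPochhammer a t n * qPochhammer (-a) t n = qPochhammer (a ^ 2) (t ^ 2) n := by
  rw [qPochhammer, qPochhammer, qPochhammer, ← prod_mul_distrib]
  exact prod_congr rfl fun i _ => by ring

theorem qPochhammer_self_two_mul (q : R) (M : ℕ) :
    qPochhammer q q (2 * M) = qPochhammer q (q ^ 2) M * qPochhammer (q ^ 2) (q ^ 2) M := by
  induction M with
  | zero => simp
  | succ M ih =>
    rw [show 2 * (M + 1) = 2 * M + 1 + 1 by ring, qPochhammer_succ, qPochhammer_succ, ih,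
      qPochhammer_succ, qPochhammer_succ]
    ring

theorem mk_span_singleton_eq_mk_iff_dvd_sub {d u v : R} :
    Ideal.Quotient.mk (Ideal.span {d}) u = Ideal.Quotient.mk (Ideal.span {d}) v ↔ d ∣ u - v := by
  rw [Ideal.Quotient.eq, Ideal.mem_span_singleton]

theorem dvd_prod_range_sub_prod_range {d : R} {f : ℕ → R} {k m n : ℕ}
    (hf : ∀ i, k ≤ i → d ∣ f i - 1) (hm : k ≤ m) (hn : k ≤ n) :
    d ∣ ∏ i ∈ range m, f i - ∏ i ∈ range n, f i := by
  let φ := Ideal.Quotient.mk (Ideal.span {d})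
  have hstable : ∀ l, k ≤ l → φ (∏ i ∈ range l, f i) = φ (∏ i ∈ range k, f i) := by
    intro l hl
    have htail : φ (∏ i ∈ Ico k l, f i) = 1 := by
      rw [map_prod]
      exact prod_eq_one fun i hi => by
        rw [← map_one φ, mk_span_singleton_eq_mk_iff_dvd_sub]; exact hf i (mem_Ico.1 hi).1
    rw [← prod_range_mul_prod_Ico f hl, map_mul, htail, mul_one]
  rw [← mk_span_singleton_eq_mk_iff_dvd_sub, hstable m hm, hstable n hn]

theorem mul_pow_dvd_qPochhammer_sub_qPochhammer (a t : R) {k m n : ℕ} (hm : k ≤ m) (hn : k ≤ n) :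
    a * t ^ k ∣ qPochhammer a t m - qPochhammer a t n :=
  dvd_prod_range_sub_prod_range (fun i hi => by
    rw [sub_sub_cancel_left, dvd_neg]; exact mul_dvd_mul_left a (pow_dvd_pow t hi)) hm hn

/-- `gaussianBinomial t a b` is the Gaussian binomial coefficient `[a+b, a]_t`; indexing it by the
two parts of `a + b` avoids truncated subtraction. -/
def gaussianBinomial (t : R) : ℕ → ℕ → R
  | 0, _ => 1
  | _ + 1, 0 => 1
  | a + 1, b + 1 => gaussianBinomial t a (b + 1) + t ^ (a + 1) * gaussianBinomial t (a + 1) b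

namespace gaussianBinomial

variable (t : R)

@[simp] lemma zero_left (b : ℕ) : gaussianBinomial t 0 b = 1 := by rw [gaussianBinomial]

@[simp] lemma zero_right (a : ℕ) : gaussianBinomial t a 0 = 1 := by
  cases a <;> rw [gaussianBinomial]

lemma succ_succ (a b : ℕ) : gaussianBinomial t (a + 1) (b + 1) =
    gaussianBinomial t a (b + 1) + t ^ (a + 1) * gaussianBinomial t (a + 1) b := by
  rw [gaussianBinomial]

end gaussianBinomial

theorem gaussianBinomial_mul_qPochhammer (t : R) (a b : ℕ) :
    gaussianBinomial t a b * qPochhammer t t b = qPochhammer (t ^ (a + 1)) t b := by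
  induction a generalizing b with
  | zero => simp
  | succ a iha =>
    induction b with
    | zero => simp
    | succ b ihb =>
      rw [gaussianBinomial.succ_succ, add_mul, iha, qPochhammer_succ' (t ^ (a + 1)), ← pow_succ,
        qPochhammer_succ t t, qPochhammer_succ (t ^ (a + 1 + 1)), ← ihb]
      ring

theorem pow_succ_dvd_gaussianBinomial_mul_qPochhammer_sub_one (t : R) {k a b K : ℕ}
    (ha : k ≤ a) (hb : k ≤ b) (hK : k ≤ K) :
    t ^ (k + 1) ∣ gaussianBinomial t a b * qPochhammer t t K - 1 := by
  have hP : t ^ (k + 1) ∣ qPochhammer t t K - qPochhammer t t b := by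
    rw [pow_succ']; exact mul_pow_dvd_qPochhammer_sub_qPochhammer t t hK hb
  have hA : t ^ (k + 1) ∣ qPochhammer (t ^ (a + 1)) t b - 1 := by
    refine (pow_dvd_pow t (by omega : k + 1 ≤ a + 1)).trans ?_
    simpa using mul_pow_dvd_qPochhammer_sub_qPochhammer (t ^ (a + 1)) t (Nat.zero_le b) le_rfl
  have : gaussianBinomial t a b * qPochhammer t t K - 1 =
      gaussianBinomial t a b * (qPochhammer t t K - qPochhammer t t b) +
        (qPochhammer (t ^ (a + 1)) t b - 1) := by
    rw [← gaussianBinomial_mul_qPochhammer]; ring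
  rw [this]
  exact dvd_add (hP.mul_left _) hA

theorem sum_antidiagonal_succ_gaussianBinomial_mul (t : R) (f : ℕ → ℕ → R) (n : ℕ) :
    ∑ p ∈ antidiagonal (n + 1), gaussianBinomial t p.1 p.2 * f p.1 p.2 =
      ∑ p ∈ antidiagonal n, gaussianBinomial t p.1 p.2 * f (p.1 + 1) p.2 +
        ∑ p ∈ antidiagonal n, t ^ p.1 * gaussianBinomial t p.1 p.2 * f p.1 (p.2 + 1) := by
  -- Both sums on the right are sums over `antidiagonal (n + 1)` of shifted terms extended by
  -- zero; termwise, the identity is then the recursion of `gaussianBinomial`.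
  have h₁ := Nat.sum_antidiagonal_succ (n := n)
    (f := fun p => if p.1 = 0 then 0 else gaussianBinomial t (p.1 - 1) p.2 * f p.1 p.2)
  have h₂ := Nat.sum_antidiagonal_succ' (n := n)
    (f := fun p => if p.2 = 0 then 0 else t ^ p.1 * gaussianBinomial t p.1 (p.2 - 1) * f p.1 p.2)
  simp only [Nat.add_eq_zero_iff, one_ne_zero, and_false, if_false, if_true,
    add_tsub_cancel_right, zero_add] at h₁ h₂
  rw [← h₁, ← h₂, ← sum_add_distrib]
  refine sum_congr rfl fun ⟨a, b⟩ hab => ?_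
  rw [HasAntidiagonal.mem_antidiagonal] at hab
  rcases a with _ | a <;> rcases b with _ | b
  · omega
  · simp
  · simp
  · simp [gaussianBinomial.succ_succ]
    ring

theorem prod_add_mul_pow_eq_sum_gaussianBinomial (x y t : R) (n : ℕ) :
    ∏ i ∈ range n, (x + y * t ^ i) =
      ∑ p ∈ antidiagonal n,
        gaussianBinomial t p.1 p.2 * (t ^ p.1.choose 2 * y ^ p.1 * x ^ p.2) := by
  induction n generalizing y with
  | zero => simp
  | succ n ih =>
    have hshift : ∏ i ∈ range n, (x + y * t ^ (i + 1)) = ∏ i ∈ range n, (x + (y * t) * t ^ i) :=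
      prod_congr rfl fun i _ => by ring
    rw [prod_range_succ', hshift, ih, sum_antidiagonal_succ_gaussianBinomial_mul t
      (fun a b => t ^ a.choose 2 * y ^ a * x ^ b), sum_mul, ← sum_add_distrib]
    refine sum_congr rfl fun p _ => ?_
    rw [Nat.choose_succ_succ', Nat.choose_one_right]
    ring

theorem prod_range_mul_sq_pow (q : R) (M : ℕ) : ∏ i ∈ range M, q * (q ^ 2) ^ i = q ^ (M ^ 2) := by
  induction M with
  | zero => simp
  | succ M ih => rw [prod_range_succ, ih]; ring

theorem prod_range_two_mul_pow_add_mul_sq_pow (q : R) (M : ℕ) :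
    ∏ i ∈ range (2 * M), (q ^ (2 * M) + q * (q ^ 2) ^ i) =
      q ^ (3 * M ^ 2) * qPochhammer (-q) (q ^ 2) M ^ 2 := by
  have hlow : ∏ i ∈ range M, (q ^ (2 * M) + q * (q ^ 2) ^ i) =
      q ^ (M ^ 2) * qPochhammer (-q) (q ^ 2) M := by
    rw [← prod_range_reflect, ← prod_range_mul_sq_pow,
      ← prod_range_reflect (fun i => q * (q ^ 2) ^ i), qPochhammer, ← prod_mul_distrib]
    refine prod_congr rfl fun i hi => ?_
    obtain ⟨j, rfl⟩ := Nat.exists_eq_add_of_lt (mem_range.1 hi)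
    rw [show i + j + 1 - 1 - i = j by omega]
    ring
  have hhigh : ∏ i ∈ range M, (q ^ (2 * M) + q * (q ^ 2) ^ (M + i)) =
      q ^ (2 * M ^ 2) * qPochhammer (-q) (q ^ 2) M := by
    rw [qPochhammer, show q ^ (2 * M ^ 2) = ∏ _i ∈ range M, q ^ (2 * M) by
      rw [prod_const, card_range, ← pow_mul]; ring_nf, ← prod_mul_distrib]
    exact prod_congr rfl fun i _ => by ring
  rw [two_mul, prod_range_add, ← two_mul, hlow, hhigh]
  ring

theorem qPochhammer_neg_sq_eq_sum_gaussianBinomial {q : R} (hq : IsLeftRegular q) (M : ℕ) :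
    qPochhammer (-q) (q ^ 2) M ^ 2 =
      ∑ p ∈ antidiagonal (2 * M),
        q ^ (((p.1 : ℤ) - M).natAbs ^ 2) * gaussianBinomial (q ^ 2) p.1 p.2 := by
  have hexp : ∀ a b, a + b = 2 * M →
      2 * a.choose 2 + a + 2 * M * b = 3 * M ^ 2 + ((a : ℤ) - M).natAbs ^ 2 := by
    intro a b h
    have hb : (b : ℚ) = 2 * M - a := by rw [eq_sub_iff_add_eq, add_comm]; exact_mod_cast h
    qify
    rw [Nat.cast_choose_two, hb, sq_abs]
    ring
  refine hq.pow (3 * M ^ 2) ?_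
  simp only
  rw [← prod_range_two_mul_pow_add_mul_sq_pow, prod_add_mul_pow_eq_sum_gaussianBinomial, mul_sum]
  refine sum_congr rfl fun p hp => ?_
  rw [← pow_mul, ← pow_mul, ← pow_add, ← pow_add,
    hexp p.1 p.2 (HasAntidiagonal.mem_antidiagonal.1 hp), pow_add]
  ring

theorem isUnit_qPochhammer {a : R⟦X⟧} (ha : constantCoeff a = 0) (t : R⟦X⟧) (n : ℕ) :
    IsUnit (qPochhammer a t n) := by
  rw [isUnit_iff_constantCoeff, qPochhammer, map_prod]
  simp [ha]

theorem coeff_neg_X_pow (t m : ℕ) :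
    coeff t ((-X : R⟦X⟧) ^ m) = if m = t then (-1) ^ t else 0 := by
  rw [neg_pow, ← map_one (C (R := R)), ← map_neg, ← map_pow, coeff_C_mul_X_pow]
  split_ifs <;> simp_all

end QAnalogues

theorem neg_one_pow_sq_eq_neg_one_pow {α : Type*} [Monoid α] [HasDistribNeg α] (s : ℕ) :
    (-1 : α) ^ (s ^ 2) = (-1) ^ s := by
  rcases Nat.even_or_odd s with h | h
  · rw [h.neg_one_pow, (Nat.even_pow.2 ⟨h, two_ne_zero⟩).neg_one_pow]
  · rw [h.neg_one_pow, h.pow.neg_one_pow]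

theorem filter_antidiagonal_natAbs_sub_sq_eq (M t : ℕ) (ht : t ≤ M) :
    (antidiagonal (2 * M)).filter (fun p => ((p.1 : ℤ) - M).natAbs ^ 2 = t) =
      if t.sqrt ^ 2 = t then {(M + t.sqrt, M - t.sqrt), (M - t.sqrt, M + t.sqrt)} else ∅ := by
  have hs : t.sqrt ≤ M := (Nat.sqrt_le_self t).trans ht
  set s := t.sqrt with hs_def
  ext ⟨a, b⟩
  simp only [mem_filter, HasAntidiagonal.mem_antidiagonal]
  split_ifs with hsq
  · rw [← hsq, pow_left_inj₀ (Nat.zero_le _) (Nat.zero_le _) two_ne_zero]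
    simp only [mem_insert, mem_singleton, Prod.mk.injEq]
    omega
  · simp only [notMem_empty, iff_false, not_and]
    rintro - rfl
    exact hsq (by rw [hs_def, Nat.sqrt_eq'])

theorem coeff_sum_antidiagonal_neg_X_pow {M t : ℕ} (ht : t ≤ M) :
    coeff t (∑ p ∈ antidiagonal (2 * M), (-X : ℤ⟦X⟧) ^ (((p.1 : ℤ) - M).natAbs ^ 2)) =
      coeff t jacobiRHS := by
  simp only [map_sum, coeff_neg_X_pow, sum_ite, sum_const_zero, add_zero, sum_const,
    filter_antidiagonal_natAbs_sub_sq_eq M t ht, jacobiRHS, coeff_mk]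
  rcases eq_or_ne t 0 with rfl | ht0
  · simp
  obtain ⟨s, rfl⟩ | hsq := em (∃ s, s ^ 2 = t)
  · have hs : s ≠ 0 := by rintro rfl; exact ht0 rfl
    rw [Nat.sqrt_eq', if_pos rfl, if_neg ht0, if_pos rfl, card_pair (by simp; omega),
      neg_one_pow_sq_eq_neg_one_pow, nsmul_eq_mul]
    norm_num
  · have : t.sqrt ^ 2 ≠ t := fun h => hsq ⟨_, h⟩
    simp [this, ht0]

theorem X_pow_dvd_qPochhammer_sq_mul_sub_jacobiRHS {n M : ℕ} (hn : n ≤ M) :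
    (X : ℤ⟦X⟧) ^ (n + 1) ∣
      qPochhammer X (X ^ 2) M ^ 2 * qPochhammer (X ^ 2) (X ^ 2) M - jacobiRHS := by
  have hJTP := qPochhammer_neg_sq_eq_sum_gaussianBinomial
    (IsRegular.of_ne_zero (neg_ne_zero.2 (X_ne_zero (R := ℤ)))).left M
  rw [neg_neg, neg_sq] at hJTP
  set θ := ∑ p ∈ antidiagonal (2 * M), (-X : ℤ⟦X⟧) ^ (((p.1 : ℤ) - M).natAbs ^ 2)
  have hθ : (X : ℤ⟦X⟧) ^ (n + 1) ∣ θ - jacobiRHS :=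
    X_pow_dvd_iff.2 fun t ht => by
      rw [map_sub, sub_eq_zero, coeff_sum_antidiagonal_neg_X_pow (by omega)]
  have hterm : ∀ p ∈ antidiagonal (2 * M), (X : ℤ⟦X⟧) ^ (n + 1) ∣
      (-X) ^ (((p.1 : ℤ) - M).natAbs ^ 2) *
        (gaussianBinomial (X ^ 2) p.1 p.2 * qPochhammer (X ^ 2) (X ^ 2) M - 1) := by
    intro p hp
    rw [HasAntidiagonal.mem_antidiagonal] at hp
    set d := ((p.1 : ℤ) - M).natAbs
    by_cases hlarge : n + 1 ≤ d ^ 2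
    · refine ((pow_dvd_pow X hlarge).trans ?_).mul_right _
      rw [neg_pow]
      exact dvd_mul_left _ _
    · -- both `p.1` and `p.2` are at least `M - d`, and `2 (M - d) + 2 > n` as `2 d ≤ d² + 1`
      have h2d : 2 * d ≤ n + 1 := by nlinarith
      refine Dvd.dvd.mul_left ?_ _
      refine (pow_dvd_pow X (by omega : n + 1 ≤ 2 * (M - d + 1))).trans ?_
      rw [pow_mul]
      exact pow_succ_dvd_gaussianBinomial_mul_qPochhammer_sub_one _ (by omega) (by omega) (by omega)
  have hsplit : qPochhammer X (X ^ 2) M ^ 2 * qPochhammer (X ^ 2) (X ^ 2) M - jacobiRHS =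
      ∑ p ∈ antidiagonal (2 * M), (-X) ^ (((p.1 : ℤ) - M).natAbs ^ 2) *
        (gaussianBinomial (X ^ 2) p.1 p.2 * qPochhammer (X ^ 2) (X ^ 2) M - 1) +
      (θ - jacobiRHS) := by
    rw [hJTP, sum_mul, ← sub_add_sub_cancel _ θ, ← sum_sub_distrib]
    congr 1
    exact sum_congr rfl fun p _ => by ring
  rw [hsplit]
  exact dvd_add (dvd_sum hterm) hθ

theorem X_pow_dvd_qPochhammer_sub_jacobiRHS_mul {n N : ℕ} (hn : n ≤ N) :
    (X : ℤ⟦X⟧) ^ (n + 1) ∣ qPochhammer X X N - jacobiRHS * qPochhammer (-X) X N := by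
  let φ := Ideal.Quotient.mk (Ideal.span {(X : ℤ⟦X⟧) ^ (n + 1)})
  have hA : φ (qPochhammer X X N) = φ (qPochhammer X X (2 * N)) :=
    mk_span_singleton_eq_mk_iff_dvd_sub.2 <| by
      rw [pow_succ']; exact mul_pow_dvd_qPochhammer_sub_qPochhammer X X hn (by omega)
  have hB : φ (qPochhammer (-X) X N) = φ (qPochhammer (-X) X (2 * N)) :=
    mk_span_singleton_eq_mk_iff_dvd_sub.2 <| by
      rw [pow_succ', ← neg_dvd, ← neg_mul]
      exact mul_pow_dvd_qPochhammer_sub_qPochhammer (-X) X hn (by omega)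
  have hE : φ (qPochhammer (X ^ 2) (X ^ 2) (2 * N)) = φ (qPochhammer (X ^ 2) (X ^ 2) N) :=
    mk_span_singleton_eq_mk_iff_dvd_sub.2 <| by
      refine (pow_dvd_pow X (by omega : n + 1 ≤ 2 + 2 * n)).trans ?_
      rw [pow_add, pow_mul]
      exact mul_pow_dvd_qPochhammer_sub_qPochhammer _ _ (by omega) hn
  have hθ := mk_span_singleton_eq_mk_iff_dvd_sub.2 (X_pow_dvd_qPochhammer_sq_mul_sub_jacobiRHS hn)
  have hsplit := congrArg φ (qPochhammer_self_two_mul (X : ℤ⟦X⟧) N)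
  have hprod := congrArg φ (qPochhammer_mul_qPochhammer_neg (X : ℤ⟦X⟧) X (2 * N))
  have hunit := (isUnit_qPochhammer (a := X) (by simp) X (2 * N)).map φ
  simp only [map_mul, map_pow] at hθ hsplit hprod
  rw [← mk_span_singleton_eq_mk_iff_dvd_sub, hA, map_mul, hB]
  refine hunit.mul_left_cancel ?_
  -- `(q; q)_{2N}² = (q; q²)_N² (q²; q²)_N² ≡ θ (q²; q²)_N ≡ θ (q²; q²)_{2N}`
  -- `= θ (q; q)_{2N} (-q; q)_{2N}`, with `θ = jacobiRHS`
  linear_combination (φ (qPochhammer X X (2 * N)) + φ (qPochhammer X (X ^ 2) N) *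
      φ (qPochhammer (X ^ 2) (X ^ 2) N)) * hsplit - φ jacobiRHS * hprod - φ jacobiRHS * hE +
    φ (qPochhammer (X ^ 2) (X ^ 2) N) * hθ

/-- `Π_{i≥1} (1−q^i)/(1+q^i) = Σ_{i∈ℤ} (−q)^{i²} = 1 + 2 Σ_{i≥1} (−1)^i q^{i²}`:
the infinite product is understood coefficientwise, each coefficient of the
partial products being eventually constant (stable as soon as `n ≤ N`). -/
theorem stmt8 :
    ∀ n N : ℕ, n ≤ N →
      (PowerSeries.coeff (R := ℤ) n) (∏ j ∈ Finset.range N, jacobiFactor j)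
        = (PowerSeries.coeff (R := ℤ) n) jacobiRHS := by
  intro n N h
  have hfactor : (∏ j ∈ range N, jacobiFactor j) * qPochhammer (-X) X N = qPochhammer X X N := by
    rw [qPochhammer, qPochhammer, ← prod_mul_distrib]
    refine prod_congr rfl fun j _ => ?_
    rw [jacobiFactor, neg_mul, sub_neg_eq_add, ← pow_succ', mul_assoc, mul_comm (invOfUnit _ _),
      mul_invOfUnit (1 + X ^ (j + 1)) 1 (by simp), mul_one]
  have hdvd : (X : ℤ⟦X⟧) ^ (n + 1) ∣ ∏ j ∈ range N, jacobiFactor j - jacobiRHS := by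
    rw [← (isUnit_qPochhammer (a := -X) (by simp) X N).dvd_mul_right, sub_mul, hfactor]
    exact X_pow_dvd_qPochhammer_sub_jacobiRHS_mul h
  rw [← sub_eq_zero, ← map_sub]
  exact X_pow_dvd_iff.1 hdvd n (by omega)
end

section
/- The generating function of the sequence P_k = Σ_{i=0}^k (−1)^i (2i+1) q^{C(k+1,2) − C(i+1,2)} satisfies Σ_{k≥0} P_k z^k = Σ_{j≥0} (1 − z q^j)/(1 + z q^j)^2 · q^{C(j+1,2)} z^j as formal power series in z with coefficients in ℤ[q]. -/
open PowerSeries Polynomial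

/-- `P_k = Σ_{i=0}^k (−1)^i (2i+1) q^{C(k+1,2) − C(i+1,2)}` as a polynomial in `q`. -/
noncomputable def Ppoly (k : ℕ) : Polynomial ℤ :=
  ∑ i ∈ Finset.range (k + 1),
    Polynomial.C ((-1 : ℤ) ^ i * (2 * i + 1)) *
      Polynomial.X ^ ((k + 1).choose 2 - (i + 1).choose 2)

/-- The `j`-th summand `(1 − zq^j)/(1 + zq^j)² · q^{C(j+1,2)} z^j` of the right-hand
side, as a power series in `z` over `ℤ[q]`. -/
noncomputable def Pterm (j : ℕ) : PowerSeries (Polynomial ℤ) :=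
  (1 - PowerSeries.C (Polynomial.X ^ j) * PowerSeries.X) *
    PowerSeries.invOfUnit ((1 + PowerSeries.C (Polynomial.X ^ j) * PowerSeries.X) ^ 2) 1 *
    PowerSeries.C (Polynomial.X ^ ((j + 1).choose 2)) * PowerSeries.X ^ j

/-!
With `y = z q^j`, the `j`-th summand is `(1 - y)/(1 + y)² · q^{C(j+1,2)} z^j` and
`(1 - y)/(1 + y)² = Σ_i (-1)^i (2i+1) y^i`, so its `z^{i+j}`-coefficient is
`(-1)^i (2i+1) q^{ij + C(j+1,2)}`. Since `C(i+j+1,2) = C(i+1,2) + ij + C(j+1,2)`, reindexing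
the coefficient of `z^n` by `i = n - j` gives exactly `P_n`.
-/

namespace PowerSeries

variable {R : Type*} [CommRing R]

variable (R) in
noncomputable def altOddSeries : R⟦X⟧ :=
  mk fun i => (-1) ^ i * (2 * i + 1)

@[simp]
theorem coeff_altOddSeries (n : ℕ) :
    coeff n (altOddSeries R) = (-1) ^ n * (2 * n + 1) :=
  coeff_mk _ _

theorem one_add_X_sq_mul_altOddSeries : (1 + X) ^ 2 * altOddSeries R = 1 - X := by
  have hexpand : (1 + X) ^ 2 * altOddSeries R =
      altOddSeries R + X * altOddSeries R + X * altOddSeries R + X ^ 2 * altOddSeries R := by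
    ring
  ext (_ | _ | n) <;>
    simp only [hexpand, map_add, map_sub, coeff_altOddSeries, coeff_X_pow_mul', coeff_one,
      coeff_X, coeff_succ_X_mul, coeff_zero_X_mul]
  · simp
  · norm_num
  · rw [if_pos (by omega), if_neg (by omega), if_neg (by omega), show n + 1 + 1 - 2 = n by omega]
    push_cast
    ring

theorem one_add_C_mul_X_sq_mul_rescale_altOddSeries (a : R) :
    (1 + C a * X) ^ 2 * rescale a (altOddSeries R) = 1 - C a * X := by
  simpa [rescale_X] using congrArg (rescale a) (one_add_X_sq_mul_altOddSeries (R := R))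

theorem mul_invOfUnit_eq_of_mul_eq {φ ψ χ : R⟦X⟧} {u : Rˣ} (hφ : constantCoeff φ = u)
    (h : φ * χ = ψ) : ψ * invOfUnit φ u = χ := by
  rw [← h, mul_right_comm, mul_invOfUnit φ u hφ, one_mul]

theorem one_sub_C_mul_X_mul_invOfUnit (a : R) :
    (1 - C a * X) * invOfUnit ((1 + C a * X) ^ 2) 1 = rescale a (altOddSeries R) :=
  mul_invOfUnit_eq_of_mul_eq (by simp) (one_add_C_mul_X_sq_mul_rescale_altOddSeries a)

end PowerSeries

theorem Nat.add_add_one_choose_two (j i : ℕ) :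
    (j + i + 1).choose 2 = (i + 1).choose 2 + (j * i + (j + 1).choose 2) := by
  induction j with
  | zero => simp
  | succ j ih =>
    rw [show j + 1 + i + 1 = j + i + 1 + 1 by ring, Nat.choose_succ_succ', ih,
      Nat.choose_succ_succ' (j + 1), Nat.choose_one_right, Nat.choose_one_right]
    ring

theorem Pterm_eq_rescale_altOddSeries (j : ℕ) :
    Pterm j = rescale (Polynomial.X ^ j) (altOddSeries ℤ[X]) *
      PowerSeries.C (Polynomial.X ^ (j + 1).choose 2) * PowerSeries.X ^ j := by
  rw [Pterm, one_sub_C_mul_X_mul_invOfUnit]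

theorem coeff_Pterm (j i : ℕ) :
    coeff (j + i) (Pterm j) =
      Polynomial.C ((-1 : ℤ) ^ i * (2 * i + 1)) *
        Polynomial.X ^ ((j + i + 1).choose 2 - (i + 1).choose 2) := by
  rw [Pterm_eq_rescale_altOddSeries, add_comm j i, PowerSeries.coeff_mul_X_pow,
    PowerSeries.coeff_mul_C, coeff_rescale, coeff_altOddSeries, add_comm i j,
    Nat.add_add_one_choose_two, Nat.add_sub_cancel_left, pow_add, ← pow_mul]
  simp only [map_mul, map_pow, map_neg, map_one, map_add, map_natCast, map_ofNat]
  ring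

/-- `Σ_{k≥0} P_k z^k = Σ_{j≥0} (1 − zq^j)/(1 + zq^j)² q^{C(j+1,2)} z^j` as formal
power series in `z` over `ℤ[q]`; the infinite sum on the right is understood
coefficientwise (the `j`-th term has order `≥ j` in `z`). -/
theorem stmt10 :
    ∀ n : ℕ, Ppoly n
      = ∑ j ∈ Finset.range (n + 1), (PowerSeries.coeff n) (Pterm j) := by
  intro n
  rw [Ppoly, ← Finset.sum_range_reflect]
  refine Finset.sum_congr rfl fun j hj => ?_
  obtain ⟨i, rfl⟩ := Nat.exists_eq_add_of_le (Finset.mem_range_succ_iff.mp hj)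
  rw [show j + i + 1 - 1 - j = i by omega, coeff_Pterm]
end

section
/- Lagrange inversion instance: if u = z/(1+z)^2 as formal power series (so z is the compositional inverse of u), then the coefficient of u^n in z^k equals (k/n)·C(2n, n−k) for n ≥ k ≥ 1. -/
/-!
The hypothesis says `w ∘ u = z`. Since `u` has a compositional inverse, a left inverse is also a
right inverse, so `u ∘ w = z`, i.e. `w = z (1 + w)²`. Comparing coefficients in
`w ^ j = z ^ j (1 + w) ^ (2 j)` expresses `[z^(m+j)] w^j` through the `[z^m] w^i`, and the
formula `m [z^m] w^j = j C(2m, m+j)` follows by strong induction on `m`, the inductive step being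
a Vandermonde convolution.
-/

open PowerSeries Finset

namespace Nat

theorem sum_range_choose_mul_choose_add (a b c : ℕ) :
    ∑ i ∈ range (a + 1), a.choose i * b.choose (c + i) = (a + b).choose (a + c) := by
  set g : ℕ → ℕ := fun p ↦ a.choose p * b.choose (a + c - p)
  calc ∑ i ∈ range (a + 1), a.choose i * b.choose (c + i)
      = ∑ i ∈ range (a + 1), g (a + 1 - 1 - i) := by
        refine sum_congr rfl fun i hi ↦ ?_
        rw [mem_range] at hi
        simp only [g, choose_symm_of_eq_add (show a = i + (a - i) by omega)]
        congr 2
        omega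
    _ = ∑ p ∈ range (a + 1), g p := sum_range_reflect g (a + 1)
    _ = ∑ p ∈ range (a + c + 1), g p := by
        refine sum_subset (range_subset_range.mpr (by omega)) fun p _ hp ↦ ?_
        rw [mem_range, not_lt] at hp
        simp only [g, choose_eq_zero_of_lt (show a < p by omega), zero_mul]
    _ = (a + b).choose (a + c) := by
        rw [add_choose_eq, Finset.Nat.sum_antidiagonal_eq_sum_range_succ
          (fun p q ↦ a.choose p * b.choose q)]

theorem sum_range_mul_choose_mul_choose_add (a b c : ℕ) :
    ∑ j ∈ range (a + 2), j * (a + 1).choose j * b.choose (c + j)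
      = (a + 1) * (a + b).choose (a + c + 1) := by
  rw [sum_range_succ', show a + c + 1 = a + (c + 1) by ring,
    ← sum_range_choose_mul_choose_add, mul_sum]
  simp only [zero_mul, add_zero]
  refine sum_congr rfl fun i _ ↦ ?_
  rw [mul_comm (i + 1), ← add_one_mul_choose_eq]
  ring_nf

theorem mul_sum_range_mul_choose_mul_choose (m k : ℕ) :
    (m + k) * ∑ j ∈ range (2 * k + 1), j * (2 * k).choose j * (2 * m).choose (m + j)
      = k * m * (2 * (m + k)).choose (m + 2 * k) := by
  cases k with
  | zero => simp
  | succ k =>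
    have h := choose_mul_succ_eq (2 * k + 1 + 2 * m) (2 * k + 1 + m + 1)
    rw [show 2 * k + 1 + 2 * m + 1 = 2 * (m + (k + 1)) by ring,
      show 2 * (m + (k + 1)) - (2 * k + 1 + m + 1) = m by omega] at h
    rw [show 2 * (k + 1) + 1 = 2 * k + 1 + 2 by ring, show 2 * (k + 1) = 2 * k + 1 + 1 by ring,
      sum_range_mul_choose_mul_choose_add, show m + (2 * k + 1 + 1) = 2 * k + 1 + m + 1 by ring]
    calc (m + (k + 1)) * ((2 * k + 1 + 1) * (2 * k + 1 + 2 * m).choose (2 * k + 1 + m + 1))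
        = (k + 1) * ((2 * k + 1 + 2 * m).choose (2 * k + 1 + m + 1) * (2 * (m + (k + 1)))) := by
          ring
      _ = (k + 1) * m * (2 * (m + (k + 1))).choose (2 * k + 1 + m + 1) := by rw [h]; ring

end Nat

namespace PowerSeries

variable {R : Type*} [CommRing R]

theorem coeff_pow_eq_zero_of_lt {f : R⟦X⟧} (hf : constantCoeff f = 0) {m j : ℕ} (h : m < j) :
    coeff m (f ^ j) = 0 :=
  X_pow_dvd_iff.mp (pow_dvd_pow_of_dvd (X_dvd_iff.mpr hf) j) m h

theorem coeff_subst_eq_sum_range {a : R⟦X⟧} (ha : constantCoeff a = 0) (f : R⟦X⟧) (m : ℕ) :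
    coeff m (f.subst a) = ∑ d ∈ range (m + 1), coeff d f * coeff m (a ^ d) := by
  rw [coeff_subst' (HasSubst.of_constantCoeff_zero' ha), finsum_eq_sum_of_support_subset]
  · rfl
  · intro d hd
    by_contra hdm
    rw [coe_range, Set.mem_Iio, not_lt] at hdm
    exact hd (show coeff d f • coeff m (a ^ d) = 0 by
      rw [coeff_pow_eq_zero_of_lt ha (by omega), smul_zero])

theorem eq_substInvOfIsUnit_of_subst_eq_X {P w : R⟦X⟧} (hP : constantCoeff P = 0)
    (hP' : IsUnit (coeff 1 P)) (h : w.subst P = X) : w = P.substInvOfIsUnit hP' := by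
  have hQ := HasSubst.substInvOfIsUnit P hP'
  have key := subst_comp_subst_apply (HasSubst.of_constantCoeff_zero' hP) hQ w
  rwa [h, subst_X hQ, subst_substInvOfIsUnit_right P hP hP', X_subst, eq_comm] at key

variable {K : Type*} [Field K] {w : K⟦X⟧}

theorem eq_X_mul_one_add_sq_of_subst_eq_X (hw : HasSubst w)
    (h : (X * ((1 + X) ^ 2)⁻¹ : K⟦X⟧).subst w = X) : w = X * (1 + w) ^ 2 := by
  have hinv : substAlgHom hw ((1 + X) ^ 2 : K⟦X⟧)⁻¹ * (1 + w) ^ 2 = 1 := by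
    have := congrArg (substAlgHom hw) (PowerSeries.inv_mul_cancel ((1 + X) ^ 2 : K⟦X⟧) (by simp))
    rwa [map_mul, map_one, map_pow, map_add, map_one, substAlgHom_X] at this
  rw [← coe_substAlgHom hw, map_mul, substAlgHom_X] at h
  calc w = w * (substAlgHom hw ((1 + X) ^ 2 : K⟦X⟧)⁻¹ * (1 + w) ^ 2) := by rw [hinv, mul_one]
    _ = X * (1 + w) ^ 2 := by rw [← mul_assoc, h]

/- `w = X * (1 + w) ^ 2` says that `1 + w` is the Catalan generating function. -/

theorem constantCoeff_eq_zero_of_catalan_eq (hw : w = X * (1 + w) ^ 2) : constantCoeff w = 0 := by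
  rw [hw]
  simp

theorem coeff_add_pow_of_catalan_eq (hw : w = X * (1 + w) ^ 2) (m j : ℕ) :
    coeff (m + j) (w ^ j) = ∑ i ∈ range (2 * j + 1), ((2 * j).choose i : K) * coeff m (w ^ i) := by
  conv_lhs => rw [hw, mul_pow, ← pow_mul, coeff_X_pow_mul, add_comm, add_pow, map_sum]
  refine sum_congr rfl fun i _ ↦ ?_
  rw [one_pow, mul_one, ← map_natCast (C (R := K)), coeff_mul_C, mul_comm]

theorem coeff_pow_self_of_catalan_eq (hw : w = X * (1 + w) ^ 2) (j : ℕ) : coeff j (w ^ j) = 1 := by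
  have h := coeff_add_pow_of_catalan_eq hw 0 j
  rw [zero_add] at h
  rw [h, sum_eq_single 0]
  · simp
  · intro i _ hi
    rw [coeff_zero_eq_constantCoeff_apply, map_pow, constantCoeff_eq_zero_of_catalan_eq hw,
      zero_pow hi, mul_zero]
  · simp

theorem natCast_mul_coeff_pow_of_catalan_eq [CharZero K] (hw : w = X * (1 + w) ^ 2) (m j : ℕ) :
    (m : K) * coeff m (w ^ j) = j * (2 * m).choose (m + j) := by
  induction m using Nat.strong_induction_on generalizing j with
  | _ m ih =>
  rcases lt_or_ge m j with hmj | hjm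
  · rw [coeff_pow_eq_zero_of_lt (constantCoeff_eq_zero_of_catalan_eq hw) hmj,
      Nat.choose_eq_zero_of_lt (by omega : 2 * m < m + j)]
    simp
  obtain ⟨m, rfl⟩ : ∃ m', m = m' + j := ⟨m - j, by omega⟩
  rcases Nat.eq_zero_or_pos j with rfl | hj
  · rw [add_zero, pow_zero, coeff_one]
    split_ifs with hm <;> simp [hm]
  rcases Nat.eq_zero_or_pos m with rfl | hm
  · rw [zero_add, coeff_pow_self_of_catalan_eq hw, ← two_mul, Nat.choose_self]
    simp
  set S := ∑ i ∈ range (2 * j + 1), i * (2 * j).choose i * (2 * m).choose (m + i)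
  have hrec : (m : K) * coeff (m + j) (w ^ j) = S := by
    rw [coeff_add_pow_of_catalan_eq hw, mul_sum, Nat.cast_sum]
    refine sum_congr rfl fun i _ ↦ ?_
    rw [mul_left_comm, ih m (by omega) i]
    push_cast
    ring
  have hbin := Nat.mul_sum_range_mul_choose_mul_choose m j
  apply mul_left_cancel₀ (Nat.cast_ne_zero.mpr hm.ne' : (m : K) ≠ 0)
  calc (m : K) * ((m + j : ℕ) * coeff (m + j) (w ^ j)) = ((m + j) * S : ℕ) := by
        rw [Nat.cast_mul, ← hrec]
        ring
    _ = m * (j * (2 * (m + j)).choose (m + j + j)) := by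
        rw [hbin, show m + j + j = m + 2 * j by ring]
        push_cast
        ring

end PowerSeries

theorem stmt19_general (w : PowerSeries ℚ)
    (hw : ∀ m : ℕ,
      (PowerSeries.coeff (R := ℚ) m) (PowerSeries.X : PowerSeries ℚ)
        = ∑ n ∈ Finset.range (m + 1),
            (PowerSeries.coeff (R := ℚ) n) w *
              (PowerSeries.coeff (R := ℚ) m)
                ((PowerSeries.X * ((1 + PowerSeries.X : PowerSeries ℚ) ^ 2)⁻¹) ^ n))
    (n k : ℕ) (hk : 1 ≤ k) (hkn : k ≤ n) :
    (PowerSeries.coeff (R := ℚ) n) (w ^ k)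
      = ((k : ℚ) / n) * ((2 * n).choose (n - k) : ℚ) := by
  set u : ℚ⟦X⟧ := X * ((1 + X) ^ 2)⁻¹
  have hu0 : constantCoeff u = 0 := by simp [u]
  have hu1 : IsUnit (coeff 1 u) := by simp [u]
  have hwu : w.subst u = X := by
    ext m
    rw [coeff_subst_eq_sum_range hu0, hw m]
  have hwQ := eq_substInvOfIsUnit_of_subst_eq_X hu0 hu1 hwu
  have hcat : w = X * (1 + w) ^ 2 := by
    refine eq_X_mul_one_add_sq_of_subst_eq_X (hwQ ▸ HasSubst.substInvOfIsUnit u hu1) ?_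
    rw [hwQ]
    exact subst_substInvOfIsUnit_right u hu0 hu1
  have hcoeff := natCast_mul_coeff_pow_of_catalan_eq hcat n k
  rw [Nat.choose_symm_of_eq_add (show 2 * n = n + k + (n - k) by omega)] at hcoeff
  have hn : (n : ℚ) ≠ 0 := Nat.cast_ne_zero.mpr (by omega)
  field_simp
  linear_combination hcoeff

/-- Lagrange inversion instance: let `u = z/(1+z)²` in `ℚ⟦z⟧` and let `w = z(u)` be
the compositional inverse of `u` (i.e. `w` has zero constant term and
`w(u(z)) = z`, the substitution being expressed coefficientwise, which is
legitimate since `u` has order `1`).  Then for `1 ≤ k ≤ n`, the coefficient of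
`uⁿ` in `z(u)^k`, i.e. the `n`-th coefficient of `w^k`, is `(k/n)·C(2n, n−k)`. -/
theorem stmt19 (w : PowerSeries ℚ)
    (hw0 : PowerSeries.constantCoeff (R := ℚ) w = 0)
    (hw : ∀ m : ℕ,
      (PowerSeries.coeff (R := ℚ) m) (PowerSeries.X : PowerSeries ℚ)
        = ∑ n ∈ Finset.range (m + 1),
            (PowerSeries.coeff (R := ℚ) n) w *
              (PowerSeries.coeff (R := ℚ) m)
                ((PowerSeries.X * ((1 + PowerSeries.X : PowerSeries ℚ) ^ 2)⁻¹) ^ n))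
    (n k : ℕ) (hk : 1 ≤ k) (hkn : k ≤ n) :
    (PowerSeries.coeff (R := ℚ) n) (w ^ k)
      = ((k : ℚ) / n) * ((2 * n).choose (n - k) : ℚ) :=
  stmt19_general w hw n k hk hkn
end
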